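/- Let c be an orthogonal transformation of ℝⁿ with I − c invertible and μ = 2(I−c)⁻¹. If τ is a unit vector then μ(τ) is the unique vector v with R(τ)c(v) = v and v·τ = 1, provided the fixed space of R(τ)c is one-dimensional. -/

import Mathlib

/-! Write `w = μ τ`, so that `w - c w = 2τ`. Since `c` preserves norms, expanding
`‖w‖² = ‖w - 2τ‖²` gives `w·τ = 1`, and then `R(τ)(c w) = (w - 2τ) + 2τ = w`. Any other fixed
vector `v` of `R(τ) ∘ c` with `v·τ = 1` lies on the same line as `w` and has the same pairing
with `τ`, hence equals `w`. -/

open scoped RealInnerProductSpace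

noncomputable section

/-- The reflection in the hyperplane `τ^⊥`, as a linear map:
`R(τ)(x) = x - 2(x·τ)τ`. -/
def reflectL {n : ℕ} (τ : EuclideanSpace ℝ (Fin n)) :
    EuclideanSpace ℝ (Fin n) →ₗ[ℝ] EuclideanSpace ℝ (Fin n) where
  toFun x := x - (2 * ⟪x, τ⟫) • τ
  map_add' x y := by rw [inner_add_left]; module
  map_smul' r x := by rw [real_inner_smul_left]; simp only [RingHom.id_apply]; module

lemma reflectL_apply {n : ℕ} (τ x : EuclideanSpace ℝ (Fin n)) :
    reflectL τ x = x - (2 * ⟪x, τ⟫) • τ := rfl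

lemma reflectL_sub_two_smul {n : ℕ} {τ w : EuclideanSpace ℝ (Fin n)} (hτ : ‖τ‖ = 1)
    (hw : ⟪w, τ⟫ = 1) : reflectL τ (w - (2 : ℝ) • τ) = w := by
  rw [reflectL_apply, inner_sub_left, real_inner_smul_left, hw, real_inner_self_eq_norm_sq, hτ]
  module

lemma LinearIsometry.two_mul_inner_sub_self_eq_norm_sq {E : Type*} [NormedAddCommGroup E]
    [InnerProductSpace ℝ E] (f : E →ₗᵢ[ℝ] E) (x : E) :
    2 * ⟪x, x - f x⟫ = ‖x - f x‖ ^ 2 := by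
  rw [norm_sub_sq_real, inner_sub_right, real_inner_self_eq_norm_sq, f.norm_map]
  ring

lemma Submodule.eq_of_mem_of_finrank_eq_one {K V : Type*} [Field K] [AddCommGroup V] [Module K V]
    {S : Submodule K V} (hS : Module.finrank K S = 1) (f : V →ₗ[K] K) {v w : V}
    (hv : v ∈ S) (hw : w ∈ S) (hfvw : f v = f w) (hfw : f w ≠ 0) : v = w := by
  obtain ⟨u, -, hu⟩ := finrank_eq_one_iff'.mp hS
  obtain ⟨a, ha⟩ := hu ⟨v, hv⟩
  obtain ⟨b, hb⟩ := hu ⟨w, hw⟩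
  replace ha : a • (u : V) = v := congrArg Subtype.val ha
  replace hb : b • (u : V) = w := congrArg Subtype.val hb
  have hfu : f u ≠ 0 := fun h => hfw (by rw [← hb, map_smul, h, smul_zero])
  have hab : a = b := by
    rw [← ha, ← hb, map_smul, map_smul, smul_eq_mul, smul_eq_mul] at hfvw
    exact mul_right_cancel₀ hfu hfvw
  rw [← ha, ← hb, hab]

theorem stmt_5_general {n : ℕ} (c : EuclideanSpace ℝ (Fin n) ≃ₗᵢ[ℝ] EuclideanSpace ℝ (Fin n))
    (μ : EuclideanSpace ℝ (Fin n) →ₗ[ℝ] EuclideanSpace ℝ (Fin n))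
    (hμ₁ : ∀ x, μ x - c (μ x) = (2 : ℝ) • x)
    (τ : EuclideanSpace ℝ (Fin n)) (hτ : ‖τ‖ = 1)
    (hfix : Module.finrank ℝ
      (LinearMap.ker (reflectL τ ∘ₗ (c.toLinearEquiv : EuclideanSpace ℝ (Fin n) →ₗ[ℝ] EuclideanSpace ℝ (Fin n))
        - LinearMap.id)) = 1) :
    (reflectL τ (c (μ τ)) = μ τ ∧ ⟪μ τ, τ⟫ = 1) ∧
      ∀ v, reflectL τ (c v) = v → ⟪v, τ⟫ = 1 → v = μ τ := by
  have hcμ : c (μ τ) = μ τ - (2 : ℝ) • τ := by rw [← hμ₁ τ, sub_sub_cancel]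
  have hμτ : ⟪μ τ, τ⟫ = 1 := by
    have h := c.toLinearIsometry.two_mul_inner_sub_self_eq_norm_sq (μ τ)
    rw [LinearIsometryEquiv.coe_toLinearIsometry, hμ₁, real_inner_smul_right, norm_smul, hτ] at h
    norm_num at h
    linarith
  have hfixμ : reflectL τ (c (μ τ)) = μ τ := by rw [hcμ, reflectL_sub_two_smul hτ hμτ]
  refine ⟨⟨hfixμ, hμτ⟩, fun v hv hvτ => ?_⟩
  have mem_fix : ∀ x, reflectL τ (c x) = x → x ∈ LinearMap.ker
      (reflectL τ ∘ₗ (c.toLinearEquiv : EuclideanSpace ℝ (Fin n) →ₗ[ℝ] EuclideanSpace ℝ (Fin n))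
        - LinearMap.id) := fun x hx => by simpa [sub_eq_zero] using hx
  refine Submodule.eq_of_mem_of_finrank_eq_one hfix ((innerₛₗ ℝ).flip τ) (mem_fix v hv)
    (mem_fix _ hfixμ) ?_ ?_ <;> simp [hvτ, hμτ]

/-- Let `c` be an orthogonal transformation of `ℝⁿ` with `I - c` invertible and
`μ = 2 (I - c)⁻¹`.  If `τ` is a unit vector then `μ(τ)` is the unique vector `v`
with `R(τ)(c(v)) = v` and `v·τ = 1`, provided the fixed space of `R(τ) ∘ c` is
one-dimensional. -/
theorem stmt_5 {n : ℕ} (c : EuclideanSpace ℝ (Fin n) ≃ₗᵢ[ℝ] EuclideanSpace ℝ (Fin n))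
    (μ : EuclideanSpace ℝ (Fin n) →ₗ[ℝ] EuclideanSpace ℝ (Fin n))
    (hμ₁ : ∀ x, μ x - c (μ x) = (2 : ℝ) • x)
    (hμ₂ : ∀ x, μ (x - c x) = (2 : ℝ) • x)
    (τ : EuclideanSpace ℝ (Fin n)) (hτ : ‖τ‖ = 1)
    (hfix : Module.finrank ℝ
      (LinearMap.ker (reflectL τ ∘ₗ (c.toLinearEquiv : EuclideanSpace ℝ (Fin n) →ₗ[ℝ] EuclideanSpace ℝ (Fin n))
        - LinearMap.id)) = 1) :
    (reflectL τ (c (μ τ)) = μ τ ∧ ⟪μ τ, τ⟫ = 1) ∧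
      ∀ v, reflectL τ (c v) = v → ⟪v, τ⟫ = 1 → v = μ τ :=
  stmt_5_general c μ hμ₁ τ hτ hfix
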